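/- arXiv:2511.07462 — 5 statements merged into one kernel-verified Lean document; each statement's English description precedes it below -/
import Mathlib

section
/- For every positive integer m, every real number a, and every natural number n, the integral of the noncentral Tanny-Dowling polynomial over the interval [-1,0] satisfies ∫_{-1}^{0} F̃_{m,a}(n; m·x) dx = m^n · B_n(-a/m), where B_n denotes the n-th Bernoulli polynomial. -/
/-!
Expanding the Whitney numbers gives `F̃_{m,a}(n; m x) = mⁿ Σ_k Δ^k[tⁿ](-a/m) xᵏ`, where `Δ` is the
forward difference, so the integral is `mⁿ Σ_k (-1)^k/(k+1) Δ^k[tⁿ](-a/m)`, i.e. `mⁿ P_n(-a/m)` with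
`P_n = log (1 + Δ) / Δ [tⁿ]`. Since `Σ_{k ≤ n} C(n+1,k) tᵏ = Δ[tⁿ⁺¹]` and `log (1 + Δ) = d/dt` on
polynomials (differentiate Newton's expansion of `(y + s)ⁿ` at `s = 0`), the `P_n` satisfy
`Σ_{k ≤ n} C(n+1,k) P_k(y) = (n+1) yⁿ`, the recursion that determines the Bernoulli polynomials.
-/

open Finset MeasureTheory

/-- Noncentral Whitney numbers of the second kind:
`W̃_{m,a}(n,k) = (1/(m^k k!)) Σ_{j=0}^{k} (-1)^{k-j} C(k,j) (m j - a)^n`. -/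
noncomputable def ncWhitney (m : ℕ) (a : ℝ) (n k : ℕ) : ℝ :=
  (1 / ((m : ℝ) ^ k * (Nat.factorial k : ℝ))) *
    ∑ j ∈ Finset.range (k + 1),
      (-1 : ℝ) ^ (k - j) * (Nat.choose k j : ℝ) * ((m : ℝ) * (j : ℝ) - a) ^ n

/-- Noncentral Tanny-Dowling polynomials:
`F̃_{m,a}(n;x) = Σ_{k=0}^{n} k! W̃_{m,a}(n,k) x^k`. -/
noncomputable def ncTannyDowling (m : ℕ) (a : ℝ) (n : ℕ) (x : ℝ) : ℝ :=
  ∑ k ∈ Finset.range (n + 1), (Nat.factorial k : ℝ) * ncWhitney m a n k * x ^ k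

/-- Noncentral Dowling polynomials:
`D̃_{m,a}(n;x) = Σ_{k=0}^{n} W̃_{m,a}(n,k) x^k`. -/
noncomputable def ncDowling (m : ℕ) (a : ℝ) (n : ℕ) (x : ℝ) : ℝ :=
  ∑ k ∈ Finset.range (n + 1), ncWhitney m a n k * x ^ k

open Polynomial Nat

section FwdDiffPow

variable {R : Type*} [CommRing R]

theorem descPochhammer_eval_neg_one (k : ℕ) :
    (descPochhammer R k).eval (-1) = (-1) ^ k * k ! := by
  induction k with
  | zero => simp
  | succ k ih =>
    rw [descPochhammer_succ_eval, ih, factorial_succ]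
    push_cast
    ring

theorem derivative_descPochhammer_succ_eval_zero (k : ℕ) :
    (derivative (descPochhammer R (k + 1))).eval 0 = (-1) ^ k * k ! := by
  simp [descPochhammer_succ_left, descPochhammer_eval_neg_one]

theorem sum_range_mul_fwdDiff_iter_pow_of_le (c : ℕ → R) {n N : ℕ} (hnN : n ≤ N) (y : R) :
    ∑ j ∈ range (N + 1), c j * (fwdDiff 1)^[j] (fun t : R ↦ t ^ n) y =
      ∑ j ∈ range (n + 1), c j * (fwdDiff 1)^[j] (fun t : R ↦ t ^ n) y := by
  refine (sum_subset (range_subset_range.mpr (by omega)) fun j _ hj ↦ ?_).symm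
  rw [fwdDiff_iter_pow_eq_zero_of_lt (by simpa using hj), Pi.zero_apply, mul_zero]

theorem fwdDiff_pow_succ (n : ℕ) :
    fwdDiff 1 (fun t : R ↦ t ^ (n + 1)) =
      ∑ k ∈ range (n + 1), (n + 1).choose k • fun t : R ↦ t ^ k := by
  ext t
  simp [nsmul_eq_mul, fwdDiff, add_pow, sum_range_succ, mul_comm]

theorem fwdDiff_iter_pow_eq_sum (n k : ℕ) (y : R) :
    (fwdDiff 1)^[k] (fun t : R ↦ t ^ n) y =
      ∑ j ∈ range (k + 1), (-1) ^ (k - j) * (k.choose j : R) * (y + j) ^ n := by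
  rw [fwdDiff_iter_eq_sum_shift]
  refine sum_congr rfl fun j _ ↦ ?_
  simp [zsmul_eq_mul]

variable {K : Type*} [Field K] [CharZero K]

/-- Newton's forward-difference expansion of `(y + s) ^ n`: `descPochhammer K k / k!` is the
binomial polynomial `s.choose k`. -/
theorem sum_fwdDiff_iter_pow_mul_descPochhammer (n : ℕ) (y : K) :
    ∑ k ∈ range (n + 1), C ((fwdDiff 1)^[k] (fun t : K ↦ t ^ n) y / k !) * descPochhammer K k =
      (C y + X) ^ n := by
  refine eq_of_infinite_eval_eq _ _ <|
    ((Set.Ici_infinite n).image Nat.cast_injective.injOn).mono ?_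
  rintro _ ⟨s, hs, rfl⟩
  have hsub : range (n + 1) ⊆ range (s + 1) := range_subset_range.mpr (Nat.succ_le_succ hs)
  simp only [Set.mem_ofPred_eq, eval_finsetSum, eval_mul, eval_C, eval_pow, eval_add, eval_X,
    descPochhammer_eval_eq_descFactorial, descFactorial_eq_factorial_mul_choose]
  have newton := shift_eq_sum_fwdDiff_iter 1 (fun t : K ↦ t ^ n) s y
  rw [nsmul_one, ← sum_subset hsub] at newton
  · rw [newton]
    refine sum_congr rfl fun k _ ↦ ?_
    have : (k ! : K) ≠ 0 := mod_cast k.factorial_ne_zero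
    rw [nsmul_eq_mul, cast_mul]
    field_simp
  · intro k _ hkn
    rw [fwdDiff_iter_pow_eq_zero_of_lt (by simpa using hkn), Pi.zero_apply, smul_zero]

/-- The operator identity `log (1 + Δ) = d/dt` on `t ↦ t ^ n`. -/
theorem sum_fwdDiff_iter_succ_pow (n : ℕ) (y : K) :
    ∑ k ∈ range n, (-1) ^ k / (k + 1) * (fwdDiff 1)^[k + 1] (fun t : K ↦ t ^ n) y =
      n * y ^ (n - 1) := by
  have h := congrArg (fun p ↦ (derivative p).eval 0) (sum_fwdDiff_iter_pow_mul_descPochhammer n y)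
  simp only [derivative_sum, derivative_mul, derivative_C, zero_mul, zero_add, eval_finsetSum,
    eval_mul, eval_C, derivative_pow, derivative_add, derivative_X, eval_pow, eval_add, eval_X,
    add_zero, mul_one] at h
  rw [sum_range_succ', descPochhammer_zero, derivative_one, eval_zero, mul_zero, add_zero] at h
  rw [← h]
  refine sum_congr rfl fun k _ ↦ ?_
  rw [derivative_descPochhammer_succ_eval_zero, factorial_succ]
  have : (k ! : K) ≠ 0 := mod_cast k.factorial_ne_zero
  push_cast
  field_simp

theorem eq_of_forall_sum_choose_mul_eq {f g : ℕ → K}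
    (h : ∀ n, ∑ k ∈ range (n + 1), ((n + 1).choose k : K) * f k =
      ∑ k ∈ range (n + 1), ((n + 1).choose k : K) * g k) : f = g := by
  funext n
  induction n using Nat.strong_induction_on with
  | _ n ih =>
    have hn := h n
    rw [sum_range_succ, sum_range_succ, sum_congr rfl fun k hk ↦ by rw [ih k (mem_range.1 hk)],
      add_right_inj, choose_succ_self_right] at hn
    exact mul_left_cancel₀ (mod_cast n.succ_ne_zero) hn

theorem sum_choose_mul_sum_fwdDiff_iter_pow (n : ℕ) (y : K) :
    ∑ k ∈ range (n + 1), ((n + 1).choose k : K) *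
      ∑ j ∈ range (k + 1), (-1) ^ j / (j + 1) * (fwdDiff 1)^[j] (fun t : K ↦ t ^ k) y =
        (n + 1) * y ^ n := by
  calc _ = ∑ k ∈ range (n + 1), ((n + 1).choose k : K) *
        ∑ j ∈ range (n + 1), (-1) ^ j / (j + 1) * (fwdDiff 1)^[j] (fun t : K ↦ t ^ k) y :=
          sum_congr rfl fun k hk ↦ by
            rw [sum_range_mul_fwdDiff_iter_pow_of_le _ (mem_range_succ_iff.1 hk)]
    _ = ∑ j ∈ range (n + 1), (-1) ^ j / (j + 1) *
          ∑ k ∈ range (n + 1), (n + 1).choose k • (fwdDiff 1)^[j] (fun t : K ↦ t ^ k) y := by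
      simp only [mul_sum, nsmul_eq_mul]
      rw [sum_comm]
      exact sum_congr rfl fun _ _ ↦ sum_congr rfl fun _ _ ↦ by ring
    _ = ∑ j ∈ range (n + 1), (-1) ^ j / (j + 1) *
          (fwdDiff 1)^[j + 1] (fun t : K ↦ t ^ (n + 1)) y := by
      simp only [Function.iterate_succ_apply, fwdDiff_pow_succ, fwdDiff_iter_finsetSum,
        fwdDiff_iter_const_smul, Finset.sum_apply, Pi.smul_apply]
    _ = (n + 1) * y ^ n := by
      rw [sum_fwdDiff_iter_succ_pow]
      push_cast
      rfl

theorem aeval_bernoulli_eq_sum_fwdDiff_iter_pow (n : ℕ) (y : K) :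
    aeval y (bernoulli n) =
      ∑ k ∈ range (n + 1), (-1) ^ k / (k + 1) * (fwdDiff 1)^[k] (fun t : K ↦ t ^ n) y := by
  refine congrFun (eq_of_forall_sum_choose_mul_eq (f := fun n ↦ aeval y (bernoulli n))
    (g := fun n ↦ ∑ k ∈ range (n + 1), (-1) ^ k / (k + 1) * (fwdDiff 1)^[k] (fun t : K ↦ t ^ n) y)
    fun n ↦ ?_) n
  rw [sum_choose_mul_sum_fwdDiff_iter_pow]
  have h := congrArg (aeval y) (sum_bernoulli n)
  simp only [map_sum, map_smul, aeval_monomial, Rat.smul_def] at h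
  simpa using h

end FwdDiffPow

theorem factorial_mul_ncWhitney_mul_pow {m : ℕ} (hm : m ≠ 0) (a : ℝ) (n k : ℕ) :
    (k ! : ℝ) * ncWhitney m a n k * (m : ℝ) ^ k =
      (m : ℝ) ^ n * (fwdDiff 1)^[k] (fun t : ℝ ↦ t ^ n) (-a / m) := by
  have hm' : (m : ℝ) ≠ 0 := mod_cast hm
  have hk : (k ! : ℝ) ≠ 0 := mod_cast k.factorial_ne_zero
  rw [fwdDiff_iter_pow_eq_sum, mul_sum]
  calc _ = ∑ j ∈ range (k + 1), (-1) ^ (k - j) * (k.choose j : ℝ) * ((m : ℝ) * j - a) ^ n := by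
        rw [ncWhitney]
        field_simp
    _ = _ := sum_congr rfl fun j _ ↦ by
        rw [show (m : ℝ) * j - a = m * (-a / m + j) by field_simp; ring, mul_pow]
        ring

theorem ncTannyDowling_natCast_mul {m : ℕ} (hm : m ≠ 0) (a : ℝ) (n : ℕ) (x : ℝ) :
    ncTannyDowling m a n (m * x) =
      (m : ℝ) ^ n * ∑ k ∈ range (n + 1), (fwdDiff 1)^[k] (fun t : ℝ ↦ t ^ n) (-a / m) * x ^ k := by
  rw [ncTannyDowling, mul_sum]
  refine sum_congr rfl fun k _ ↦ ?_
  rw [mul_pow, ← mul_assoc, factorial_mul_ncWhitney_mul_pow hm]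
  ring

theorem integral_sum_mul_pow_neg_one_zero (c : ℕ → ℝ) (N : ℕ) :
    ∫ x in (-1 : ℝ)..0, ∑ k ∈ range N, c k * x ^ k = ∑ k ∈ range N, c k * ((-1) ^ k / (k + 1)) := by
  rw [intervalIntegral.integral_finsetSum fun k _ ↦ by
    exact (continuous_const.mul (continuous_pow k)).intervalIntegrable _ _]
  refine sum_congr rfl fun k _ ↦ ?_
  rw [intervalIntegral.integral_const_mul, integral_pow]
  simp [pow_succ]

/-- `∫_{-1}^{0} F̃_{m,a}(n; m x) dx = m^n B_n(-a/m)`. -/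
theorem integral_ncTannyDowling_eq_bernoulli (m : ℕ) (hm : 0 < m) (a : ℝ) (n : ℕ) :
    ∫ x in (-1 : ℝ)..0, ncTannyDowling m a n ((m : ℝ) * x) =
      (m : ℝ) ^ n * Polynomial.aeval (-a / (m : ℝ)) (Polynomial.bernoulli n) := by
  simp_rw [ncTannyDowling_natCast_mul hm.ne', intervalIntegral.integral_const_mul,
    integral_sum_mul_pow_neg_one_zero, aeval_bernoulli_eq_sum_fwdDiff_iter_pow]
  congr 1
  exact sum_congr rfl fun k _ ↦ mul_comm _ _
end

section
/- For every positive integer m, every real number a, every natural number n, and every real number x, the noncentral Tanny-Dowling polynomial is given by the Laplace-type integral F̃_{m,a}(n;x) = ∫_{0}^{∞} D̃_{m,a}(n; x·λ) · e^{-λ} dλ. -/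
open Finset MeasureTheory

/-! Since `∫₀^∞ λ ^ k e^{-λ} dλ = Γ(k + 1) = k!`, integrating a polynomial in `x λ` against
`e^{-λ}` term by term multiplies its `k`-th coefficient by `k!`; this turns the Dowling
polynomial into the Tanny-Dowling polynomial. -/

open Nat

lemma integrableOn_pow_mul_exp_neg (k : ℕ) :
    IntegrableOn (fun l : ℝ => l ^ k * Real.exp (-l)) (Set.Ioi 0) := by
  refine (Real.GammaIntegral_convergent (s := (k : ℝ) + 1) (by positivity)).congr_fun
    (fun l _ => ?_) measurableSet_Ioi
  simp only [add_sub_cancel_right, Real.rpow_natCast, mul_comm]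

lemma integral_pow_mul_exp_neg (k : ℕ) :
    ∫ l in Set.Ioi (0 : ℝ), l ^ k * Real.exp (-l) = k ! := by
  rw [← Real.Gamma_nat_eq_factorial, Real.Gamma_eq_integral (by positivity)]
  refine setIntegral_congr_fun measurableSet_Ioi (fun l _ => ?_)
  rw [add_sub_cancel_right, Real.rpow_natCast, mul_comm]

lemma integral_sum_mul_pow_mul_exp_neg (s : Finset ℕ) (c : ℕ → ℝ) (x : ℝ) :
    ∫ l in Set.Ioi (0 : ℝ), (∑ k ∈ s, c k * (x * l) ^ k) * Real.exp (-l) =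
      ∑ k ∈ s, k ! * c k * x ^ k := by
  have hterm (k : ℕ) (l : ℝ) :
      c k * (x * l) ^ k * Real.exp (-l) = c k * x ^ k * (l ^ k * Real.exp (-l)) := by ring
  simp_rw [Finset.sum_mul, hterm]
  rw [integral_finsetSum _ fun k _ => (integrableOn_pow_mul_exp_neg k).const_mul _]
  refine Finset.sum_congr rfl fun k _ => ?_
  rw [integral_const_mul, integral_pow_mul_exp_neg]
  ring

theorem ncTannyDowling_eq_integral_ncDowling_general (m : ℕ) (a : ℝ) (n : ℕ) (x : ℝ) :
    ncTannyDowling m a n x =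
      ∫ l in Set.Ioi (0 : ℝ), ncDowling m a n (x * l) * Real.exp (-l) := by
  unfold ncDowling
  rw [integral_sum_mul_pow_mul_exp_neg, ncTannyDowling]

/-- `F̃_{m,a}(n;x) = ∫_0^∞ D̃_{m,a}(n; xλ) e^{-λ} dλ`. -/
theorem ncTannyDowling_eq_integral_ncDowling (m : ℕ) (hm : 0 < m) (a : ℝ) (n : ℕ) (x : ℝ) :
    ncTannyDowling m a n x =
      ∫ l in Set.Ioi (0 : ℝ), ncDowling m a n (x * l) * Real.exp (-l) :=
  ncTannyDowling_eq_integral_ncDowling_general m a n x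
end

section
/- For every positive integer m, every real number a, and every real number x, there exists r > 0 such that for all real z with |z| < r, the series Σ_{n=0}^{∞} F̃_{m,a}(n;x) · z^n/n! converges and its sum equals the integral ∫_{0}^{∞} exp(-a·z - λ·(1 - (x/m)·(e^{m z} - 1))) dλ. -/
open Finset MeasureTheory

open Nat Real Filter Topology

/-!
Since `k! W̃_{m,a}(n,k) = m^{-k} Σ_j (-1)^{k-j} C(k,j) (m j - a)^n`, summing the exponential series
in `n` gives `Σ_n k! W̃_{m,a}(n,k) z^n/n! = e^{-a z} ((e^{m z} - 1)/m)^k`, and summing over `k`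
the geometric series in `c = (x/m)(e^{m z} - 1)` gives
`e^{-a z}/(1 - c) = ∫_0^∞ e^{-a z - λ(1 - c)} dλ`.
The two summations may be interchanged because the double series converges absolutely near
`z = 0`: `W̃_{m,a}(n,k) = 0` for `k > n`, since `k`-th forward differences kill polynomials of
degree `n < k`, and for `k ≤ n` crude bounds together with `(n+1)^n/n! ≤ e^{n+1}` dominate the
`n`-th row by `(n+1) e (C|z|)^n` for a constant `C`.
-/

lemma factorial_mul_ncWhitney (m : ℕ) (a : ℝ) (n k : ℕ) :
    (k ! : ℝ) * ncWhitney m a n k =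
      ((m : ℝ) ^ k)⁻¹ * ∑ j ∈ range (k + 1), (-1 : ℝ) ^ (k - j) * k.choose j * (m * j - a) ^ n := by
  rw [ncWhitney]
  field_simp

open Polynomial in
lemma ncWhitney_eq_zero_of_lt (m : ℕ) (a : ℝ) {n k : ℕ} (h : n < k) : ncWhitney m a n k = 0 := by
  have hlinear : (C (m : ℝ) * X - C a).natDegree ≤ 1 :=
    natDegree_sub_C.trans_le ((natDegree_C_mul_le _ _).trans natDegree_X_le)
  have hdeg : ((C (m : ℝ) * X - C a) ^ n).natDegree < k :=
    (natDegree_pow_le_of_le n hlinear).trans_lt (by rwa [mul_one])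
  have hdiff := congr_fun (fwdDiff_iter_eq_zero_of_degree_lt hdeg) 0
  simp only [fwdDiff_iter_eq_sum_shift, zero_add, nsmul_eq_mul, mul_one, zsmul_eq_mul, eval_pow,
    eval_sub, eval_mul, eval_C, eval_X, Int.cast_mul, Int.cast_pow, Int.cast_neg, Int.cast_one,
    Int.cast_natCast, Pi.zero_apply] at hdiff
  rw [ncWhitney, hdiff, mul_zero]

lemma hasSum_factorial_mul_ncWhitney_mul_pow_div (m : ℕ) (a z : ℝ) (k : ℕ) :
    HasSum (fun n => (k ! : ℝ) * ncWhitney m a n k * z ^ n / n !)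
      (exp (-a * z) * ((exp (m * z) - 1) / m) ^ k) := by
  have hexp (y : ℝ) : HasSum (fun n => y ^ n / n !) (exp y) :=
    exp_eq_exp_ℝ ▸ NormedSpace.expSeries_div_hasSum_exp y
  have hsum := (hasSum_sum fun j (_ : j ∈ range (k + 1)) =>
    (hexp ((m * j - a) * z)).mul_left ((-1 : ℝ) ^ (k - j) * k.choose j)).mul_left ((m : ℝ) ^ k)⁻¹
  have hterm : (fun n => (k ! : ℝ) * ncWhitney m a n k * z ^ n / n !) = fun n => ((m : ℝ) ^ k)⁻¹ *
      ∑ j ∈ range (k + 1), (-1 : ℝ) ^ (k - j) * k.choose j * (((m * j - a) * z) ^ n / n !) := by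
    ext n
    rw [factorial_mul_ncWhitney, mul_assoc, mul_div_assoc, Finset.sum_mul, Finset.sum_div]
    simp only [mul_pow]
    congr 1
    refine sum_congr rfl fun j _ => ?_
    ring
  have hexp_mul (j : ℕ) : exp ((m * j - a) * z) = exp (-a * z) * exp (m * z) ^ j := by
    rw [← exp_nat_mul, ← exp_add]; ring_nf
  have hval : exp (-a * z) * ((exp (m * z) - 1) / m) ^ k = ((m : ℝ) ^ k)⁻¹ *
      ∑ j ∈ range (k + 1), (-1 : ℝ) ^ (k - j) * k.choose j * exp ((m * j - a) * z) := by
    rw [div_pow, sub_eq_add_neg, add_pow, div_eq_inv_mul, Finset.mul_sum, Finset.mul_sum,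
      Finset.mul_sum]
    refine sum_congr rfl fun j _ => ?_
    rw [hexp_mul]
    ring
  rw [hterm, hval]
  exact hsum

lemma abs_factorial_mul_ncWhitney_le (m : ℕ) (a : ℝ) {n k : ℕ} (hkn : k ≤ n) :
    |(k ! : ℝ) * ncWhitney m a n k| ≤ (2 / m) ^ k * (m * n + |a|) ^ n := by
  have hbase (j : ℕ) (hj : j ∈ range (k + 1)) : |(m * j - a : ℝ)| ≤ m * n + |a| := by
    have hjn : (j : ℝ) ≤ n := by
      exact_mod_cast (Nat.lt_succ_iff.1 (mem_range.1 hj)).trans hkn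
    calc |(m * j - a : ℝ)| ≤ m * j + |a| := by
          simpa [abs_of_nonneg (by positivity : (0 : ℝ) ≤ m * j)] using abs_sub (m * j : ℝ) a
      _ ≤ m * n + |a| := by gcongr
  calc |(k ! : ℝ) * ncWhitney m a n k|
      ≤ ((m : ℝ) ^ k)⁻¹ * ∑ j ∈ range (k + 1), (k.choose j : ℝ) * (m * n + |a|) ^ n := by
        rw [factorial_mul_ncWhitney, abs_mul, abs_of_nonneg (by positivity)]
        gcongr
        refine (abs_sum_le_sum_abs _ _).trans (sum_le_sum fun j hj => ?_)
        rw [abs_mul, abs_mul, abs_pow, abs_neg, abs_one, one_pow, one_mul, Nat.abs_cast, abs_pow]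
        gcongr
        exact hbase j hj
    _ = (2 / m) ^ k * (m * n + |a|) ^ n := by
        rw [← sum_mul, ← Nat.cast_sum, Nat.sum_range_choose, div_pow, div_eq_inv_mul]
        push_cast
        ring

noncomputable def ncTannyDowlingTerm (m : ℕ) (a x z : ℝ) (n k : ℕ) : ℝ :=
  k ! * ncWhitney m a n k * x ^ k * z ^ n / n !

section ncTannyDowlingTerm

variable (m : ℕ) (a x z : ℝ)

lemma ncTannyDowlingTerm_eq_zero_of_lt {n k : ℕ} (h : n < k) :
    ncTannyDowlingTerm m a x z n k = 0 := by
  simp [ncTannyDowlingTerm, ncWhitney_eq_zero_of_lt m a h]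

lemma hasSum_ncTannyDowlingTerm_over_k (n : ℕ) :
    HasSum (ncTannyDowlingTerm m a x z n) (ncTannyDowling m a n x * z ^ n / n !) := by
  rw [ncTannyDowling, sum_mul, sum_div]
  exact hasSum_sum_of_ne_finset_zero fun k hk =>
    ncTannyDowlingTerm_eq_zero_of_lt m a x z (by simpa using hk)

lemma hasSum_ncTannyDowlingTerm_over_n (k : ℕ) :
    HasSum (fun n => ncTannyDowlingTerm m a x z n k)
      (exp (-a * z) * (x / m * (exp (m * z) - 1)) ^ k) := by
  have hval : exp (-a * z) * (x / m * (exp (m * z) - 1)) ^ k =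
      x ^ k * (exp (-a * z) * ((exp (m * z) - 1) / m) ^ k) := by
    rw [mul_pow, div_pow, div_pow]; ring
  rw [hval]
  exact ((hasSum_factorial_mul_ncWhitney_mul_pow_div m a z k).mul_left (x ^ k)).congr_fun
    fun n => by rw [ncTannyDowlingTerm]; ring

lemma abs_ncTannyDowlingTerm_le (n k : ℕ) :
    |ncTannyDowlingTerm m a x z n k| ≤
      exp 1 * (exp 1 * max 1 (2 * |x| / m) * (m + |a|) * |z|) ^ n := by
  rcases lt_or_ge n k with hnk | hkn
  · rw [ncTannyDowlingTerm_eq_zero_of_lt m a x z hnk, abs_zero]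
    positivity
  have hexp : ((n : ℝ) + 1) ^ n / n ! ≤ exp 1 * exp 1 ^ n := by
    rw [← exp_nat_mul, ← exp_add]
    exact (pow_div_factorial_le_exp _ (by positivity) n).trans_eq (by ring_nf)
  have hratio : (2 * |x| / m) ^ k ≤ max 1 (2 * |x| / m) ^ n :=
    (pow_le_pow_left₀ (by positivity) (le_max_right _ _) k).trans
      (pow_le_pow_right₀ (le_max_left _ _) hkn)
  have hbase : (m * n + |a| : ℝ) ≤ (m + |a|) * (n + 1) := by nlinarith [abs_nonneg a]
  calc |ncTannyDowlingTerm m a x z n k|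
      = |(k ! : ℝ) * ncWhitney m a n k| * |x| ^ k * |z| ^ n / n ! := by
        simp [ncTannyDowlingTerm, abs_mul, abs_div, abs_pow]
    _ ≤ (2 / m) ^ k * (m * n + |a|) ^ n * |x| ^ k * |z| ^ n / n ! := by
        gcongr; exact abs_factorial_mul_ncWhitney_le m a hkn
    _ = (2 * |x| / m) ^ k * ((m * n + |a|) * |z|) ^ n / n ! := by
        rw [div_pow, div_pow, mul_pow, mul_pow]; ring
    _ ≤ max 1 (2 * |x| / m) ^ n * ((m + |a|) * (n + 1) * |z|) ^ n / n ! := by gcongr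
    _ = (max 1 (2 * |x| / m) * (m + |a|) * |z|) ^ n * ((n + 1) ^ n / n !) := by
        simp only [mul_pow]; ring
    _ ≤ (max 1 (2 * |x| / m) * (m + |a|) * |z|) ^ n * (exp 1 * exp 1 ^ n) := by gcongr
    _ = exp 1 * (exp 1 * max 1 (2 * |x| / m) * (m + |a|) * |z|) ^ n := by
        simp only [mul_pow]; ring

end ncTannyDowlingTerm

lemma eventually_summable_ncTannyDowlingTerm (m : ℕ) (a x : ℝ) :
    ∀ᶠ z in 𝓝 0, Summable (Function.uncurry (ncTannyDowlingTerm m a x z)) := by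
  set C := exp 1 * max 1 (2 * |x| / m) * (m + |a|)
  have hsmall : ∀ᶠ z in 𝓝 (0 : ℝ), C * |z| < 1 :=
    (continuous_const.mul continuous_abs).continuousAt.eventually_lt continuousAt_const (by simp)
  filter_upwards [hsmall] with z hw
  have hw0 : 0 ≤ C * |z| := by positivity
  have hvanish (n k : ℕ) (hk : k ∉ range (n + 1)) : |ncTannyDowlingTerm m a x z n k| = 0 := by
    rw [ncTannyDowlingTerm_eq_zero_of_lt m a x z (by simpa using hk), abs_zero]
  have hmajorant : Summable fun n : ℕ => ((n : ℝ) + 1) * (exp 1 * (C * |z|) ^ n) := by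
    have hw' : ‖C * |z|‖ < 1 := by rwa [Real.norm_of_nonneg hw0]
    refine (((summable_pow_mul_geometric_of_norm_lt_one 1 hw').add
      (summable_geometric_of_lt_one hw0 hw)).mul_left (exp 1)).congr fun n => ?_
    ring
  refine Summable.of_abs ((summable_prod_of_nonneg fun _ => abs_nonneg _).2
    ⟨fun n => summable_of_ne_finset_zero (hvanish n), ?_⟩)
  refine hmajorant.of_nonneg_of_le (fun n => tsum_nonneg fun _ => abs_nonneg _) fun n => ?_
  simp only [Function.uncurry_apply_pair]
  rw [tsum_eq_sum (hvanish n)]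
  calc ∑ k ∈ range (n + 1), |ncTannyDowlingTerm m a x z n k|
      ≤ ∑ _k ∈ range (n + 1), exp 1 * (C * |z|) ^ n :=
        sum_le_sum fun k _ => abs_ncTannyDowlingTerm_le m a x z n k
    _ = ((n : ℝ) + 1) * (exp 1 * (C * |z|) ^ n) := by simp

lemma integral_exp_sub_mul_Ioi (b : ℝ) {s : ℝ} (hs : 0 < s) :
    ∫ l in Set.Ioi (0 : ℝ), exp (b - l * s) = exp b / s := by
  have hsplit (l : ℝ) : exp (b - l * s) = exp b * exp (-s * l) := by
    rw [← exp_add]; ring_nf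
  simp_rw [hsplit]
  rw [integral_const_mul, integral_exp_mul_Ioi (neg_neg_of_pos hs), mul_zero, exp_zero,
    neg_div_neg_eq, mul_one_div]

theorem ncTannyDowling_egf_integral_general (m : ℕ) (a : ℝ) (x : ℝ) :
    ∃ r > (0 : ℝ), ∀ z : ℝ, |z| < r →
      HasSum (fun n : ℕ => ncTannyDowling m a n x * z ^ n / (Nat.factorial n : ℝ))
        (∫ l in Set.Ioi (0 : ℝ),
          Real.exp (-a * z - l * (1 - (x / (m : ℝ)) * (Real.exp ((m : ℝ) * z) - 1)))) := by
  have hratio : ∀ᶠ z in 𝓝 (0 : ℝ), |x / m * (exp (m * z) - 1)| < 1 :=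
    (by fun_prop : Continuous fun z : ℝ => |x / m * (exp (m * z) - 1)|).continuousAt.eventually_lt
      continuousAt_const (by simp)
  obtain ⟨r, hr, hball⟩ :=
    Metric.eventually_nhds_iff.1 (hratio.and (eventually_summable_ncTannyDowlingTerm m a x))
  refine ⟨r, hr, fun z hz => ?_⟩
  obtain ⟨hc, T, hT⟩ := hball (by simpa using hz)
  have hegf := hT.prod_fiberwise (hasSum_ncTannyDowlingTerm_over_k m a x z)
  have hgeom := ((Equiv.prodComm ℕ ℕ).hasSum_iff.2 hT).prod_fiberwise
    (hasSum_ncTannyDowlingTerm_over_n m a x z)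
  rw [integral_exp_sub_mul_Ioi _ (by linarith [(abs_lt.1 hc).2]), div_eq_mul_inv,
    ← hgeom.unique ((hasSum_geometric_of_abs_lt_one hc).mul_left _)]
  exact hegf

/-- for `|z|` small, `Σ_{n≥0} F̃_{m,a}(n;x) z^n/n!` converges to
`∫_0^∞ exp(-a z - λ (1 - (x/m)(e^{m z} - 1))) dλ`. -/
theorem ncTannyDowling_egf_integral (m : ℕ) (hm : 0 < m) (a : ℝ) (x : ℝ) :
    ∃ r > (0 : ℝ), ∀ z : ℝ, |z| < r →
      HasSum (fun n : ℕ => ncTannyDowling m a n x * z ^ n / (Nat.factorial n : ℝ))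
        (∫ l in Set.Ioi (0 : ℝ),
          Real.exp (-a * z - l * (1 - (x / (m : ℝ)) * (Real.exp ((m : ℝ) * z) - 1)))) :=
  ncTannyDowling_egf_integral_general m a x
end

section
/- For every natural number n, the integral of the geometric polynomial over the interval [-1,0] equals the n-th Bernoulli number: ∫_{-1}^{0} w_n(x) dx = B_n. -/
open Finset MeasureTheory

/-- Stirling numbers of the second kind, via the standard recurrence. -/
def stirling2 : ℕ → ℕ → ℕ
  | 0, 0 => 1
  | 0, _ + 1 => 0
  | _ + 1, 0 => 0
  | n + 1, k + 1 => stirling2 n k + (k + 1) * stirling2 n (k + 1)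


lemma stirling2_eq_zero : ∀ n k, n < k → stirling2 n k = 0
  | 0, 0, h => absurd h (by simp)
  | 0, _+1, _ => rfl
  | n+1, 0, h => absurd h (by simp)
  | n+1, k+1, h => by
      show stirling2 n k + (k + 1) * stirling2 n (k + 1) = 0
      rw [stirling2_eq_zero n k (by omega), stirling2_eq_zero n (k+1) (by omega)]
      simp

lemma stirling2_succ (n k : ℕ) :
    stirling2 (n+1) (k+1) = stirling2 n k + (k + 1) * stirling2 n (k + 1) := rfl

lemma stirling2_zero_right (n : ℕ) : stirling2 (n+1) 0 = 0 := rfl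

lemma choose_mul_stirling (m : ℕ) : ∀ j, (∑ k ∈ range (m+1), m.choose k * stirling2 k j)
    = stirling2 (m+1) (j+1) := by
  induction m with
  | zero =>
    intro j
    cases j with
    | zero => simp [stirling2]
    | succ j' => simp [stirling2_succ, stirling2_eq_zero 0 (j'+1) (by omega),
        stirling2_eq_zero 0 (j'+2) (by omega)]
  | succ m ih =>
    intro j
    rw [Finset.sum_range_succ' _ (m+1)]
    have hB : ∑ k ∈ range (m+1), (m+1).choose (k+1) * stirling2 (k+1) j
        = (∑ k ∈ range (m+1), m.choose k * stirling2 (k+1) j)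
          + ∑ k ∈ range (m+1), m.choose (k+1) * stirling2 (k+1) j := by
      rw [← Finset.sum_add_distrib]
      exact Finset.sum_congr rfl fun k _ => by rw [Nat.choose_succ_succ, add_mul]
    have hB2 : (∑ k ∈ range (m+1), m.choose (k+1) * stirling2 (k+1) j)
        + stirling2 0 j = stirling2 (m+1) (j+1) := by
      have h := Finset.sum_range_succ' (fun k => m.choose k * stirling2 k j) (m+1)
      rw [Finset.sum_range_succ, Nat.choose_succ_self] at h
      simp only [Nat.choose_zero_right, one_mul, zero_mul, add_zero] at h
      rw [← ih j, h]
    have hA : ∑ k ∈ range (m+1), m.choose k * stirling2 (k+1) j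
        = stirling2 (m+1) j + j * stirling2 (m+1) (j+1) := by
      cases j with
      | zero => simp [stirling2_zero_right]
      | succ j' =>
        have e1 : ∑ k ∈ range (m+1), m.choose k * stirling2 (k+1) (j'+1)
            = (∑ k ∈ range (m+1), m.choose k * stirling2 k j')
              + (j'+1) * ∑ k ∈ range (m+1), m.choose k * stirling2 k (j'+1) := by
          rw [Finset.mul_sum, ← Finset.sum_add_distrib]
          exact Finset.sum_congr rfl fun k _ => by rw [stirling2_succ]; ring
        rw [e1, ih j', ih (j'+1)]
    rw [hB, add_assoc, add_comm (∑ k ∈ range (m+1), m.choose (k+1) * stirling2 (k+1) j),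
      ← add_assoc, hA]
    have h3 : stirling2 (m+1+1) (j+1)
        = stirling2 (m+1) j + j * stirling2 (m+1) (j+1) + stirling2 (m+1) (j+1) := by
      rw [stirling2_succ]; ring
    simp only [Nat.choose_zero_right, one_mul]
    omega


/-- `T(n) = Σ_j (-1)^j j! S(n,j)/(j+1)`. -/
def Tq (n : ℕ) : ℚ :=
  ∑ j ∈ range (n+1), (-1)^j * (j.factorial : ℚ) * (stirling2 n j : ℚ) / (j+1)

lemma Wlem : ∀ m : ℕ, (∑ j ∈ range (m+1),
    (-1:ℚ)^j * (j.factorial : ℚ) * (stirling2 m (j+1) : ℚ)) = if m = 1 then 1 else 0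
  | 0 => by simp [show stirling2 0 1 = 0 from rfl]
  | m+1 => by
    have split : ∑ j ∈ range (m+2), (-1:ℚ)^j * (j.factorial : ℚ) * (stirling2 (m+1) (j+1) : ℚ)
        = (∑ j ∈ range (m+2), (-1:ℚ)^j * (j.factorial : ℚ) * (stirling2 m j : ℚ))
          + ∑ j ∈ range (m+2), (-1:ℚ)^j * ((j+1).factorial : ℚ) * (stirling2 m (j+1) : ℚ) := by
      rw [← Finset.sum_add_distrib]
      refine Finset.sum_congr rfl fun j _ => ?_
      rw [stirling2_succ, Nat.factorial_succ]
      push_cast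
      ring
    have hP : (∑ j ∈ range (m+2), (-1:ℚ)^j * (j.factorial : ℚ) * (stirling2 m j : ℚ))
        = (∑ j ∈ range (m+1), (-1:ℚ)^(j+1) * ((j+1).factorial : ℚ) * (stirling2 m (j+1) : ℚ))
          + (stirling2 m 0 : ℚ) := by
      rw [Finset.sum_range_succ' (fun j => (-1:ℚ)^j * (j.factorial : ℚ) * (stirling2 m j : ℚ))
        (m+1)]
      simp
    have hQ : (∑ j ∈ range (m+2), (-1:ℚ)^j * ((j+1).factorial : ℚ) * (stirling2 m (j+1) : ℚ))
        = -∑ j ∈ range (m+2), (-1:ℚ)^(j+1) * ((j+1).factorial : ℚ) * (stirling2 m (j+1) : ℚ) := by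
      rw [← Finset.sum_neg_distrib]
      exact Finset.sum_congr rfl fun j _ => by ring
    have hlast : (∑ j ∈ range (m+2), (-1:ℚ)^(j+1) * ((j+1).factorial : ℚ) * (stirling2 m (j+1) : ℚ))
        = ∑ j ∈ range (m+1), (-1:ℚ)^(j+1) * ((j+1).factorial : ℚ) * (stirling2 m (j+1) : ℚ) := by
      rw [Finset.sum_range_succ, stirling2_eq_zero m (m+2) (by omega)]
      simp
    rw [split, hP, hQ, hlast]
    have : (stirling2 m 0 : ℚ) = if m + 1 = 1 then 1 else 0 := by
      cases m with
      | zero => simp [show stirling2 0 0 = 1 from rfl]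
      | succ m' => simp [stirling2_zero_right]
    rw [← this]; ring

lemma Tq_rec (m : ℕ) : (∑ k ∈ range m, (m.choose k : ℚ) * Tq k) = if m = 1 then 1 else 0 := by
  have ext : ∀ k ∈ range m, (m.choose k : ℚ) * Tq k
      = ∑ j ∈ range (m+1), (m.choose k : ℚ) *
          ((-1)^j * (j.factorial : ℚ) * (stirling2 k j : ℚ) / (j+1)) := by
    intro k hk
    rw [Finset.mem_range] at hk
    rw [Tq, Finset.mul_sum]
    refine Finset.sum_subset (by intro x hx; rw [Finset.mem_range] at *; omega) ?_
    intro j hj hj2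
    rw [Finset.mem_range] at hj hj2
    rw [stirling2_eq_zero k j (by omega)]
    simp
  rw [Finset.sum_congr rfl ext, Finset.sum_comm]
  have inner : ∀ j, (∑ k ∈ range m, (m.choose k : ℚ) * (stirling2 k j : ℚ))
      = (stirling2 (m+1) (j+1) : ℚ) - (stirling2 m j : ℚ) := by
    intro j
    have h := choose_mul_stirling m j
    rw [Finset.sum_range_succ, Nat.choose_self, one_mul] at h
    have h2 : (∑ k ∈ range m, (m.choose k : ℚ) * (stirling2 k j : ℚ)) + (stirling2 m j : ℚ)
        = (stirling2 (m+1) (j+1) : ℚ) := by exact_mod_cast h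
    linarith [h2]
  have swap : ∀ j, (∑ k ∈ range m, (m.choose k : ℚ) *
        ((-1)^j * (j.factorial : ℚ) * (stirling2 k j : ℚ) / (j+1)))
      = (-1)^j * (j.factorial : ℚ) / (j+1) * ((stirling2 (m+1) (j+1) : ℚ) - (stirling2 m j : ℚ)) := by
    intro j
    rw [← inner j, Finset.mul_sum]
    exact Finset.sum_congr rfl fun k _ => by ring
  rw [Finset.sum_congr rfl fun j _ => swap j]
  have expand : ∀ j, (-1:ℚ)^j * (j.factorial : ℚ) / (j+1) *
        ((stirling2 (m+1) (j+1) : ℚ) - (stirling2 m j : ℚ))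
      = (-1)^j * (j.factorial : ℚ) * (stirling2 m (j+1) : ℚ) := by
    intro j
    rw [stirling2_succ]
    have hj1 : ((j:ℚ)+1) ≠ 0 := by positivity
    push_cast
    field_simp
    ring
  rw [Finset.sum_congr rfl fun j _ => expand j, Wlem m]

lemma Tq_eq_bernoulli : ∀ n, Tq n = bernoulli n := by
  intro n
  induction n using Nat.strong_induction_on with
  | _ n ih =>
    cases n with
    | zero => simp [Tq, show stirling2 0 0 = 1 from rfl]
    | succ n' =>
      have h1 := Tq_rec (n'+2)
      have h2 := sum_bernoulli (n'+2)
      rw [if_neg (by omega)] at h1 h2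
      rw [Finset.sum_range_succ] at h1 h2
      have h3 : (∑ k ∈ range (n'+1), ((n'+2).choose k : ℚ) * Tq k)
          = ∑ k ∈ range (n'+1), ((n'+2).choose k : ℚ) * bernoulli k :=
        Finset.sum_congr rfl fun k hk => by
          rw [ih k (by rw [Finset.mem_range] at hk; omega)]
      rw [h3] at h1
      have h4 : ((n'+2).choose (n'+1) : ℚ) ≠ 0 := by
        simp [Nat.choose_succ_self_right]
        positivity
      have := h1.trans h2.symm
      field_simp at this
      exact mul_left_cancel₀ h4 (by linarith [this])

/-- Geometric (Fubini) polynomials: `w_n(x) = Σ_{k=0}^{n} k! S(n,k) x^k`. -/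
noncomputable def geomPoly (n : ℕ) (x : ℝ) : ℝ :=
  ∑ k ∈ Finset.range (n + 1), (Nat.factorial k : ℝ) * (stirling2 n k : ℝ) * x ^ k

/-- Exponential (Bell) polynomials: `φ_n(x) = Σ_{k=0}^{n} S(n,k) x^k`. -/
noncomputable def bellPoly (n : ℕ) (x : ℝ) : ℝ :=
  ∑ k ∈ Finset.range (n + 1), (stirling2 n k : ℝ) * x ^ k

/-- `∫_{-1}^{0} w_n(x) dx = B_n`. -/
theorem integral_geomPoly_eq_bernoulli (n : ℕ) :
    ∫ x in (-1 : ℝ)..0, geomPoly n x = (bernoulli n : ℝ) := by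
  have h1 : ∫ x in (-1 : ℝ)..0, geomPoly n x
      = ∑ k ∈ Finset.range (n+1),
          ∫ x in (-1 : ℝ)..0, (Nat.factorial k : ℝ) * (stirling2 n k : ℝ) * x ^ k := by
    unfold geomPoly
    exact intervalIntegral.integral_finset_sum (fun k _ =>
      (Continuous.intervalIntegrable (by continuity) _ _))
  rw [h1]
  have h2 : ∀ k, (∫ x in (-1 : ℝ)..0, (Nat.factorial k : ℝ) * (stirling2 n k : ℝ) * x ^ k)
      = (-1)^k * (Nat.factorial k : ℝ) * (stirling2 n k : ℝ) / (k+1) := by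
    intro k
    rw [intervalIntegral.integral_const_mul, integral_pow]
    rw [show ((0:ℝ)^(k+1) - (-1:ℝ)^(k+1)) = (-1)^k by
      rw [zero_pow (by omega), pow_succ]; ring]
    ring
  rw [Finset.sum_congr rfl fun k _ => h2 k]
  have h3 := Tq_eq_bernoulli n
  have h4 : ((Tq n : ℚ) : ℝ) = ((bernoulli n : ℚ) : ℝ) := congrArg Rat.cast h3
  rw [← h4, Tq]
  push_cast
  exact Finset.sum_congr rfl fun k _ => by ring
end

section
/- For every real number x, there exists r > 0 such that for all real z with |z| < r, the series Σ_{n=0}^{∞} w_n(x) · z^n/n! converges and its sum equals the integral ∫_{0}^{∞} e^{-λ·(1 - x·(e^{z} - 1))} dλ. -/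
open Finset MeasureTheory

/-!
The integral is `(1 - q)⁻¹` with `q = x (e^z - 1)`. Inclusion–exclusion gives
`k! S(n,k) = Σᵢ (-1)^(k-i) C(k,i) iⁿ`, hence `Σₙ k! S(n,k) zⁿ/n! = (e^z - 1)^k`. So the double
series `Σ_{k,n} k! S(n,k) x^k zⁿ/n!` sums by rows to `Σₖ q^k = (1 - q)⁻¹` and by columns to
`Σₙ wₙ(x) zⁿ/n!`. The same row sums with `|x|, |z|` show that the double series converges absolutely
as soon as `|x| (e^|z| - 1) < 1`, which holds for `|z|` small.
-/

open Nat Real Filter Topology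

theorem stirling2_eq_stirlingSecond : stirling2 = Nat.stirlingSecond := by
  funext n k
  induction n generalizing k with
  | zero => cases k <;> rfl
  | succ n ih =>
    cases k with
    | zero => rfl
    | succ k => rw [stirling2, stirlingSecond_succ_succ, ih, ih, add_comm]

section SurjSum

variable (R : Type*) [CommRing R]

/-- Inclusion–exclusion count of the surjections `Fin n → Fin k`; the sign `(-1) ^ (k + i)` is
`(-1) ^ (k - i)` without truncated subtraction. -/
def surjSum (n k : ℕ) : R :=
  ∑ i ∈ range (k + 1), (-1) ^ (k + i) * k.choose i * (i : R) ^ n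

theorem surjSum_zero_left (k : ℕ) : surjSum R 0 k = if k = 0 then 1 else 0 := by
  have h := congrArg (Int.cast : ℤ → R) (Int.alternating_sum_range_choose (n := k))
  push_cast at h
  simp_rw [surjSum, pow_zero, mul_one, pow_add, mul_assoc, ← mul_sum, h]
  split_ifs with hk <;> simp [hk]

theorem surjSum_succ_zero (n : ℕ) : surjSum R (n + 1) 0 = 0 := by
  simp [surjSum]

theorem surjSum_succ_succ (n k : ℕ) :
    surjSum R (n + 1) (k + 1) = (k + 1) * (surjSum R n k + surjSum R n (k + 1)) := by
  have hk : surjSum R n k =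
      ∑ i ∈ range (k + 2), (-1) ^ (k + i) * k.choose i * (i : R) ^ n := by
    rw [sum_range_succ, choose_succ_self]
    simp [surjSum]
  rw [hk, surjSum, surjSum, ← sum_add_distrib, mul_sum]
  refine sum_congr rfl fun i hi => ?_
  -- `i * C(k+1, i) = (k+1) * (C(k+1, i) - C(k, i))`
  have hc : (k.choose i : R) * (k + 1) = (k + 1).choose i * (k + 1 - i) := by
    have := congrArg (Nat.cast : ℕ → R) (choose_mul_succ_eq k i)
    push_cast [Nat.cast_sub (mem_range_succ_iff.mp hi)] at this
    exact this
  linear_combination (-(-1) ^ (k + i) * (i : R) ^ n) * hc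

theorem factorial_mul_stirlingSecond (n k : ℕ) :
    (k ! * stirlingSecond n k : R) = surjSum R n k := by
  induction n generalizing k with
  | zero => cases k <;> simp [surjSum_zero_left]
  | succ n ih =>
    cases k with
    | zero => simp [surjSum_succ_zero]
    | succ k =>
      rw [surjSum_succ_succ, ← ih, ← ih, stirlingSecond_succ_succ, factorial_succ]
      push_cast
      ring

end SurjSum

theorem hasSum_stirlingSecond_egf (k : ℕ) (z : ℝ) :
    HasSum (fun n => (k ! * stirlingSecond n k : ℝ) * z ^ n / n !) ((exp z - 1) ^ k) := by
  have hterm : ∀ n, (k ! * stirlingSecond n k : ℝ) * z ^ n / n ! =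
      ∑ i ∈ range (k + 1), (-1) ^ (k + i) * k.choose i * ((i * z) ^ n / n !) := fun n => by
    simp_rw [factorial_mul_stirlingSecond, surjSum, sum_mul, sum_div, mul_pow]
    exact sum_congr rfl fun i _ => by ring
  rw [funext hterm, sub_pow]
  refine hasSum_sum fun i _ => ?_
  have hexp : HasSum (fun n => (i * z) ^ n / n !) (exp (i * z)) := by
    rw [exp_eq_exp_ℝ]
    exact NormedSpace.expSeries_div_hasSum_exp _
  have hval : (-1 : ℝ) ^ (i + k) * exp z ^ i * 1 ^ (k - i) * k.choose i =
      (-1) ^ (k + i) * k.choose i * exp (i * z) := by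
    rw [exp_nat_mul, one_pow]
    ring
  rw [hval]
  exact hexp.mul_left _

theorem hasSum_stirlingSecond_egf_mul_pow (x z : ℝ) (k : ℕ) :
    HasSum (fun n => (k ! * stirlingSecond n k : ℝ) * x ^ k * z ^ n / n !)
      ((x * (exp z - 1)) ^ k) := by
  rw [mul_pow]
  exact ((hasSum_stirlingSecond_egf k z).mul_left (x ^ k)).congr_fun
    fun n => by ring

theorem abs_mul_exp_sub_one_le (x z : ℝ) : |x * (exp z - 1)| ≤ |x| * (exp |z| - 1) := by
  rw [abs_mul]
  refine mul_le_mul_of_nonneg_left (abs_le.mpr ⟨?_, ?_⟩) (abs_nonneg x)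
  · linarith [add_one_le_exp z, add_one_le_exp |z|, neg_abs_le z]
  · linarith [exp_le_exp.mpr (le_abs_self z)]

theorem hasSum_geomPoly_egf {x z : ℝ} (h : |x| * (exp |z| - 1) < 1) :
    HasSum (fun n => geomPoly n x * z ^ n / n !) (1 - x * (exp z - 1))⁻¹ := by
  set F : ℕ × ℕ → ℝ := fun p => (p.1 ! * stirlingSecond p.2 p.1 : ℝ) * x ^ p.1 * z ^ p.2 / (p.2)!
  have habs : ∀ k, HasSum (fun n => |F (k, n)|) ((|x| * (exp |z| - 1)) ^ k) := fun k =>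
    (hasSum_stirlingSecond_egf_mul_pow |x| |z| k).congr_fun fun n => by
      simp [F, abs_mul, abs_div, abs_pow]
  have hF : Summable F := by
    refine .of_abs ((summable_prod_of_nonneg fun _ => abs_nonneg _).2
      ⟨fun k => (habs k).summable, ?_⟩)
    simp_rw [fun k => (habs k).tsum_eq]
    exact summable_geometric_of_lt_one ((abs_nonneg _).trans (abs_mul_exp_sub_one_le x z)) h
  have hq : ‖x * (exp z - 1)‖ < 1 := (abs_mul_exp_sub_one_le x z).trans_lt h
  have hrows : HasSum (fun k => (x * (exp z - 1)) ^ k) (∑' p, F p) :=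
    hF.hasSum.prod_fiberwise fun k => hasSum_stirlingSecond_egf_mul_pow x z k
  rw [(hasSum_geometric_of_norm_lt_one hq).unique hrows]
  refine ((Equiv.prodComm ℕ ℕ).hasSum_iff.2 hF.hasSum).prod_fiberwise fun n => ?_
  have hcol : geomPoly n x * z ^ n / n ! = ∑ k ∈ range (n + 1), F (k, n) := by
    simp only [geomPoly, F, stirling2_eq_stirlingSecond, sum_mul, sum_div]
  rw [hcol]
  exact hasSum_sum_of_ne_finset_zero fun k hk => by
    simp [F, stirlingSecond_eq_zero_of_lt (by simpa using hk : n < k)]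

theorem integral_Ioi_exp_neg_mul {c : ℝ} (hc : 0 < c) :
    ∫ l in Set.Ioi (0 : ℝ), exp (-(l * c)) = c⁻¹ := by
  simp_rw [neg_mul_eq_mul_neg, mul_comm _ (-c)]
  rw [integral_exp_mul_Ioi (neg_lt_zero.mpr hc), mul_zero, exp_zero]
  ring

/-- for `|z|` small, `Σ_{n≥0} w_n(x) z^n/n!` converges to
`∫_0^∞ e^{-λ (1 - x (e^z - 1))} dλ`. -/
theorem geomPoly_egf_integral (x : ℝ) :
    ∃ r > (0 : ℝ), ∀ z : ℝ, |z| < r →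
      HasSum (fun n : ℕ => geomPoly n x * z ^ n / (Nat.factorial n : ℝ))
        (∫ l in Set.Ioi (0 : ℝ), Real.exp (-(l * (1 - x * (Real.exp z - 1))))) := by
  have hnear : ∀ᶠ z in 𝓝 (0 : ℝ), |x| * (exp |z| - 1) < 1 :=
    (show ContinuousAt (fun z : ℝ => |x| * (exp |z| - 1)) 0 by fun_prop).eventually
      (gt_mem_nhds (by simp))
  obtain ⟨r, hr, hball⟩ := Metric.eventually_nhds_iff.mp hnear
  refine ⟨r, hr, fun z hz => ?_⟩
  have hconv : |x| * (exp |z| - 1) < 1 := hball (by rwa [Real.dist_0_eq_abs])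
  have hq : |x * (exp z - 1)| < 1 := (abs_mul_exp_sub_one_le x z).trans_lt hconv
  rw [integral_Ioi_exp_neg_mul (by linarith [le_abs_self (x * (exp z - 1))])]
  exact hasSum_geomPoly_egf hconv
end
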